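/- For every positive integer n and every positive integer j, there exists a (j/2)-Eulerian graded poset of rank n+1; namely, D^j C, where C is the chain of rank n+1, is (j/2)-Eulerian. -/

import Mathlib

open scoped Classical

attribute [local instance] Fintype.ofFinite

/-- A rank function making a bounded poset graded of rank `n+1`. -/
def IsGraded (P : Type) [PartialOrder P] [BoundedOrder P] (ρ : P → ℕ) (n : ℕ) : Prop :=
  ρ ⊥ = 0 ∧ ρ ⊤ = n + 1 ∧ ∀ x y : P, x ⋖ y → ρ y = ρ x + 1

/-- A poset is `r`-thick if every nonempty open interval has at least `r` elements. -/
def RThick (P : Type) [PartialOrder P] [Fintype P] (r : ℕ) : Prop :=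
  ∀ x y : P, x < y → (∃ z, x < z ∧ z < y) →
    r ≤ (Finset.univ.filter fun z => x < z ∧ z < y).card

/-- The flag number `f_S(P)`: the number of chains of `P` whose set of ranks is `S`. -/
noncomputable def flagNum {P : Type} [PartialOrder P] [Fintype P] (ρ : P → ℕ)
    (S : Finset ℕ) : ℕ :=
  (Finset.univ.filter fun c : Finset P =>
    IsChain (· ≤ ·) (c : Set P) ∧ c.image ρ = S ∧ c.card = S.card).card

/-- The flag number `f_S([x,y])` of the interval `[x,y]`, with ranks relative to `x`. -/
noncomputable def flagNumI {P : Type} [PartialOrder P] [Fintype P] (ρ : P → ℕ)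
    (x y : P) (S : Finset ℕ) : ℕ :=
  (Finset.univ.filter fun c : Finset P =>
    IsChain (· ≤ ·) (c : Set P) ∧ (∀ z ∈ c, x < z ∧ z < y) ∧
      c.image (fun z => ρ z - ρ x) = S ∧ c.card = S.card).card

/-- The `k`-Möbius function `μ_k([x,y])`. -/
noncomputable def muk {P : Type} [PartialOrder P] [Fintype P] (k : ℝ) (x : P) (y : P) : ℝ :=
  if x = y then 1
  else -1 - (1/k) * ∑ z ∈ (Finset.univ.filter fun z => x < z ∧ z < y).attach,
    muk k x z.val
termination_by (Finset.univ.filter fun w => w < y).card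
decreasing_by
  have hz : (z : P) < y := (Finset.mem_filter.mp z.2).2.2
  apply Finset.card_lt_card
  rw [Finset.ssubset_iff_of_subset]
  · exact ⟨z, Finset.mem_filter.mpr ⟨Finset.mem_univ _, hz⟩,
      fun hc => absurd (Finset.mem_filter.mp hc).2 (lt_irrefl _)⟩
  · intro w hw
    exact Finset.mem_filter.mpr ⟨Finset.mem_univ _, (Finset.mem_filter.mp hw).2.trans hz⟩

/-- The ordinary Möbius function of a finite poset. -/
noncomputable def mobius {P : Type} [PartialOrder P] [Fintype P] (x : P) (y : P) : ℤ :=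
  if x = y then 1
  else -∑ z ∈ (Finset.univ.filter fun z => x ≤ z ∧ z < y).attach, mobius x z.val
termination_by (Finset.univ.filter fun w => w < y).card
decreasing_by
  have hz : (z : P) < y := (Finset.mem_filter.mp z.2).2.2
  apply Finset.card_lt_card
  rw [Finset.ssubset_iff_of_subset]
  · exact ⟨z, Finset.mem_filter.mpr ⟨Finset.mem_univ _, hz⟩,
      fun hc => absurd (Finset.mem_filter.mp hc).2 (lt_irrefl _)⟩
  · intro w hw
    exact Finset.mem_filter.mpr ⟨Finset.mem_univ _, (Finset.mem_filter.mp hw).2.trans hz⟩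

/-- A graded poset is `k`-Eulerian when `μ_k([x,y]) = (-1)^{ρ(y)-ρ(x)}` on every interval. -/
def IsKEulerian (P : Type) [PartialOrder P] [Fintype P] (ρ : P → ℕ) (k : ℝ) : Prop :=
  ∀ x y : P, x ≤ y → muk k x y = (-1 : ℝ) ^ (ρ y - ρ x)

/-- The flag `L^k` vector of a poset of rank `n+1`. -/
noncomputable def Lk {P : Type} [PartialOrder P] [Fintype P] (k : ℝ) (n : ℕ) (ρ : P → ℕ)
    (S : Finset ℕ) : ℝ :=
  (-1 : ℝ) ^ (n - S.card) *
    ∑ T ∈ (Finset.Icc 1 n).powerset.filter (fun T => Finset.Icc 1 n \ S ⊆ T),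
      (-(1/(2*k))) ^ T.card * (flagNum ρ T : ℝ)

/-- The flag `L^k` vector of an interval `[x,y]` of rank `n+1`. -/
noncomputable def LkI {P : Type} [PartialOrder P] [Fintype P] (k : ℝ) (n : ℕ) (ρ : P → ℕ)
    (x y : P) (S : Finset ℕ) : ℝ :=
  (-1 : ℝ) ^ (n - S.card) *
    ∑ T ∈ (Finset.Icc 1 n).powerset.filter (fun T => Finset.Icc 1 n \ S ⊆ T),
      (-(1/(2*k))) ^ T.card * (flagNumI ρ x y T : ℝ)

/-- A set is even if it is a disjoint union of intervals of even cardinality. -/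
def IsEvenSet (S : Finset ℕ) : Prop :=
  ∃ J : Finset (ℕ × ℕ),
    S = J.biUnion (fun p => Finset.Icc p.1 p.2) ∧
    (∀ p ∈ J, p.1 ≤ p.2 ∧ Even (p.2 + 1 - p.1)) ∧
    (∀ p ∈ J, ∀ q ∈ J, p ≠ q → Disjoint (Finset.Icc p.1 p.2) (Finset.Icc q.1 q.2))

/-- The horizontal `r`-fold duplication `D^r P`. -/
inductive Dup (P : Type) [PartialOrder P] [BoundedOrder P] (r : ℕ) : Type where
  | bot : Dup P r
  | top : Dup P r
  | mid : {x : P // x ≠ ⊥ ∧ x ≠ ⊤} → Fin r → Dup P r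

namespace Dup

variable {P : Type} [PartialOrder P] [BoundedOrder P] {r : ℕ}

def le : Dup P r → Dup P r → Prop
  | .bot, _ => True
  | .mid _ _, .bot => False
  | .mid x i, .mid y j => (x = y ∧ i = j) ∨ (x : P) < (y : P)
  | .mid _ _, .top => True
  | .top, .top => True
  | .top, _ => False

instance : PartialOrder (Dup P r) where
  le := Dup.le
  le_refl a := by cases a with
    | bot => trivial
    | top => trivial
    | mid x i => exact Or.inl ⟨rfl, rfl⟩
  le_trans a b c hab hbc := by
    cases a with
    | bot => trivial
    | top =>
      cases b with
      | top =>
        cases c with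
        | top => trivial
        | bot => exact hbc.elim
        | mid _ _ => exact hbc.elim
      | bot => exact hab.elim
      | mid _ _ => exact hab.elim
    | mid x i =>
      cases b with
      | bot => exact hab.elim
      | top =>
        cases c with
        | top => trivial
        | bot => exact hbc.elim
        | mid _ _ => exact hbc.elim
      | mid y j =>
        cases c with
        | bot => exact hbc.elim
        | top => trivial
        | mid z l =>
          rcases hab with ⟨rfl, rfl⟩ | h1
          · exact hbc
          · rcases hbc with ⟨rfl, rfl⟩ | h2
            · exact Or.inr h1
            · exact Or.inr (h1.trans h2)
  le_antisymm a b hab hba := by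
    cases a with
    | bot =>
      cases b with
      | bot => rfl
      | top => exact hba.elim
      | mid _ _ => exact hba.elim
    | top =>
      cases b with
      | top => rfl
      | bot => exact hab.elim
      | mid _ _ => exact hab.elim
    | mid x i =>
      cases b with
      | bot => exact hab.elim
      | top => exact hba.elim
      | mid y j =>
        rcases hab with ⟨rfl, rfl⟩ | h1
        · rfl
        · rcases hba with ⟨rfl, rfl⟩ | h2
          · exact absurd h1 (lt_irrefl _)
          · exact absurd (h1.trans h2) (lt_irrefl _)

instance : BoundedOrder (Dup P r) where
  top := .top
  bot := .bot
  le_top a := by cases a <;> trivial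
  bot_le a := trivial

instance [Finite P] : Finite (Dup P r) :=
  Finite.of_injective
    (fun a : Dup P r =>
      (match a with
        | .bot => none
        | .top => some none
        | .mid x i => some (some (x, i)) :
        Option (Option ({x : P // x ≠ ⊥ ∧ x ≠ ⊤} × Fin r))))
    (by intro a b h; cases a <;> cases b <;> simp_all)

/-- The rank function of `D^r P`, where `P` has rank `n+1`. -/
def rank (ρ : P → ℕ) (n : ℕ) : Dup P r → ℕ
  | .bot => 0
  | .top => n + 1
  | .mid x _ => ρ x.val

/-- `a ∈ D^r P` is a copy of `x ∈ P`. -/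
def IsCopy (a : Dup P r) (x : P) : Prop :=
  (x = ⊥ ∧ a = .bot) ∨ (x = ⊤ ∧ a = .top) ∨ ∃ h i, a = .mid ⟨x, h⟩ i

end Dup

/-! In `D^j C` the elements of `(x, y)` are exactly the elements whose rank lies strictly between
`ρ x` and `ρ y`, and each such rank is carried by exactly `j` of them. So, by induction on `y`,
`μ_k([x,y]) = -1 - (j/k) ∑_{ρ x < t < ρ y} (-1)^(t - ρ x)`, and for `k = j/2` this alternating sum
gives `(-1)^(ρ y - ρ x)`. The computation only needs a strictly monotone rank with `c` elements of
each intermediate rank in every open interval, and is done in that generality. -/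

open Finset

section RankUniform

variable {P : Type} [PartialOrder P] [Fintype P]

lemma muk_self (k : ℝ) (x : P) : muk k x x = 1 := by
  rw [muk, if_pos rfl]

lemma muk_of_ne (k : ℝ) {x y : P} (h : x ≠ y) :
    muk k x y = -1 - (1 / k) * ∑ z with x < z ∧ z < y, muk k x z := by
  rw [muk, if_neg h, sum_attach _ (muk k x)]

lemma two_mul_sum_Ioo_neg_one_pow {a b : ℕ} (h : a < b) :
    2 * ∑ t ∈ Ioo a b, (-1 : ℝ) ^ (t - a) = -1 - (-1) ^ (b - a) := by
  induction b, h using Nat.le_induction with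
  | base => rw [Nat.succ_eq_add_one, Ioo_add_one_right_eq_Ioc, Ioc_self]; simp
  | succ b hab ih =>
    rw [Ioo_add_one_right_eq_Ioc, ← Ioo_insert_right hab, sum_insert (by simp), mul_add, ih,
      show b + 1 - a = b - a + 1 by omega, pow_succ]
    ring

variable {ρ : P → ℕ} {c : ℕ}

theorem isKEulerian_of_card_filter_rank_eq (hρ : StrictMono ρ) (hc : c ≠ 0)
    (hfiber : ∀ x y t, x < y → ρ x < t → t < ρ y → #{z | x < z ∧ z < y ∧ ρ z = t} = c) :
    IsKEulerian P ρ ((c : ℝ) / 2) := by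
  intro x y hxy
  induction y using WellFoundedLT.induction with
  | ind y ih =>
  rcases hxy.eq_or_lt with rfl | hxy
  · simp [muk_self]
  have hsum : ∑ z with x < z ∧ z < y, muk ((c : ℝ) / 2) x z
      = c * ∑ t ∈ Ioo (ρ x) (ρ y), (-1 : ℝ) ^ (t - ρ x) := by
    calc ∑ z with x < z ∧ z < y, muk ((c : ℝ) / 2) x z
        = ∑ z with x < z ∧ z < y, (-1 : ℝ) ^ (ρ z - ρ x) :=
          sum_congr rfl fun z hz => ih z (mem_filter.1 hz).2.2 (mem_filter.1 hz).2.1.le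
      _ = ∑ t ∈ Ioo (ρ x) (ρ y), ∑ z ∈ {z | x < z ∧ z < y} with ρ z = t, (-1 : ℝ) ^ (t - ρ x) :=
          (sum_fiberwise_of_maps_to' (s := {z | x < z ∧ z < y}) (t := Ioo (ρ x) (ρ y))
            (fun z hz => mem_Ioo.2 ⟨hρ (mem_filter.1 hz).2.1, hρ (mem_filter.1 hz).2.2⟩)
            fun t => (-1 : ℝ) ^ (t - ρ x)).symm
      _ = c * ∑ t ∈ Ioo (ρ x) (ρ y), (-1 : ℝ) ^ (t - ρ x) := by
          rw [mul_sum]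
          refine sum_congr rfl fun t ht => ?_
          rw [sum_const, filter_filter, nsmul_eq_mul]
          simp only [and_assoc]
          rw [hfiber x y t hxy (mem_Ioo.1 ht).1 (mem_Ioo.1 ht).2]
  have hc' : (c : ℝ) ≠ 0 := Nat.cast_ne_zero.2 hc
  rw [muk_of_ne _ hxy.ne, hsum, ← mul_assoc, one_div_div, div_mul_cancel₀ _ hc',
    two_mul_sum_Ioo_neg_one_pow (hρ hxy)]
  ring

end RankUniform

theorem rank_eq_add_one_of_covBy {P : Type} [Preorder P] {ρ : P → ℕ} (hρ : StrictMono ρ)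
    (hbetween : ∀ x y t, x < y → ρ x < t → t < ρ y → ∃ z, x < z ∧ z < y ∧ ρ z = t)
    {x y : P} (h : x ⋖ y) : ρ y = ρ x + 1 := by
  have := hρ h.lt
  by_contra hne
  obtain ⟨z, hxz, hzy, -⟩ := hbetween x y (ρ x + 1) h.lt (by omega) (by omega)
  exact h.2 hxz hzy

namespace Dup

variable {P : Type} [PartialOrder P] [BoundedOrder P] {r : ℕ}

def base : Dup P r → P
  | .bot => ⊥
  | .top => ⊤
  | .mid x _ => x

lemma lt_iff_base_lt [Nontrivial P] {a b : Dup P r} : a < b ↔ a.base < b.base := by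
  rw [lt_iff_le_not_ge]
  rcases a with _ | _ | ⟨x, i⟩ <;> rcases b with _ | _ | ⟨y, l⟩ <;>
    simp [LE.le, Dup.le, base, bot_lt_iff_ne_bot, lt_top_iff_ne_top]
  · exact y.2.1
  · exact x.2.2
  · constructor
    · rintro ⟨⟨rfl, rfl⟩ | h, hne, -⟩
      · exact absurd rfl (hne rfl)
      · exact h
    · exact fun h => ⟨Or.inr h, fun e => absurd e h.ne', h.not_gt⟩

lemma rank_eq_base (ρ : P → ℕ) {n : ℕ} (hbot : ρ ⊥ = 0) (htop : ρ ⊤ = n + 1) (a : Dup P r) :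
    rank ρ n a = ρ a.base := by
  cases a <;> simp [rank, base, hbot, htop]

lemma card_filter_base_eq [Fintype (Dup P r)] [DecidableEq P] {x : P} (hx : x ≠ ⊥ ∧ x ≠ ⊤) :
    #{a : Dup P r | a.base = x} = r := by
  have : ({a : Dup P r | a.base = x} : Finset _) =
      univ.map ⟨mid ⟨x, hx⟩, fun i j h => by cases h; rfl⟩ := by
    ext a
    simp only [mem_filter, mem_univ, true_and, mem_map]
    rcases a with _ | _ | ⟨y, i⟩
    · simp [base, hx.1.symm]
    · simp [base, hx.2.symm]
    · constructor
      · rintro rfl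
        exact ⟨i, rfl⟩
      · rintro ⟨_, h⟩
        cases h
        rfl
  rw [this, card_map, card_univ, Fintype.card_fin]

section Chain

variable {n j : ℕ}

local notation "rk" => rank (fun x : Fin (n + 2) => (x : ℕ)) n

lemma chain_rank_eq (a : Dup (Fin (n + 2)) j) : rk a = (a.base : ℕ) :=
  rank_eq_base (fun x : Fin (n + 2) => (x : ℕ)) rfl rfl a

lemma chain_lt_iff_rank_lt {a b : Dup (Fin (n + 2)) j} : a < b ↔ rk a < rk b := by
  rw [lt_iff_base_lt, chain_rank_eq, chain_rank_eq, Fin.lt_def]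

lemma chain_card_filter_rank_eq {x y : Dup (Fin (n + 2)) j} {t : ℕ} (hxt : rk x < t)
    (hty : t < rk y) : #{z | x < z ∧ z < y ∧ rk z = t} = j := by
  have hy : rk y < n + 2 := (chain_rank_eq y).symm ▸ y.base.isLt
  have hc : (⟨t, by omega⟩ : Fin (n + 2)) ≠ ⊥ ∧ (⟨t, by omega⟩ : Fin (n + 2)) ≠ ⊤ := by
    simp only [ne_eq, Fin.ext_iff, bot_eq_zero, Fin.top_eq_last, Fin.val_zero, Fin.val_last]
    omega
  refine Eq.trans ?_ (card_filter_base_eq hc)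
  congr 1
  ext z
  have hz : rk z = t ↔ z.base = ⟨t, by omega⟩ := by rw [chain_rank_eq, Fin.ext_iff]
  simp only [mem_filter, mem_univ, true_and, chain_lt_iff_rank_lt, ← hz]
  omega

lemma chain_exists_rank_eq (hj : 1 ≤ j) {x y : Dup (Fin (n + 2)) j} {t : ℕ} (hxt : rk x < t)
    (hty : t < rk y) : ∃ z, x < z ∧ z < y ∧ rk z = t := by
  obtain ⟨z, hz⟩ := card_pos.1 ((chain_card_filter_rank_eq hxt hty).symm ▸ hj)
  exact ⟨z, (mem_filter.1 hz).2⟩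

end Chain

end Dup

/-- `D^j C`, for `C` the chain of rank `n+1`, is a `(j/2)`-Eulerian
graded poset of rank `n+1`. -/
theorem dup_chain_isKEulerian (n j : ℕ) (hj : 1 ≤ j) :
    IsGraded (Dup (Fin (n + 2)) j) (Dup.rank (fun x => (x : ℕ)) n) n ∧
    IsKEulerian (Dup (Fin (n + 2)) j) (Dup.rank (fun x => (x : ℕ)) n) ((j : ℝ) / 2) := by
  have hρ : StrictMono (Dup.rank (fun x : Fin (n + 2) => (x : ℕ)) n : Dup _ j → ℕ) :=
    fun _ _ => Dup.chain_lt_iff_rank_lt.1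
  exact ⟨⟨rfl, rfl, fun _ _ =>
      rank_eq_add_one_of_covBy hρ fun _ _ _ _ => Dup.chain_exists_rank_eq hj⟩,
    isKEulerian_of_card_filter_rank_eq hρ (by omega) fun _ _ _ _ =>
      Dup.chain_card_filter_rank_eq⟩
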